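/- Let 𝒲 ⊂ ℝ² be bounded, with nonempty interior, star-shaped with respect to the origin, and symmetric (−𝒲 = 𝒲). Let 𝒫 = {x ∈ ℤ[√2]² : x̄ ∈ 𝒲} where x̄ = (x̄₁, x̄₂) is componentwise Galois conjugation, embedded in ℝ² via the real embedding. Then a point x = (x₁,x₂) ∈ 𝒫 is visible (no t ∈ (0,1) with tx ∈ 𝒫) if and only if gcd(x₁,x₂) = 1 in ℤ[√2] and λx̄ ∉ 𝒲, where λ = 1 + √2. -/

import Mathlib

open Pointwise

/-- The real embedding of `ℤ[√2]`. -/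
noncomputable def emb (z : Zsqrtd 2) : ℝ := z.re + z.im * Real.sqrt 2

/-- The Galois conjugate embedding `a + b√2 ↦ a - b√2`. -/
noncomputable def embConj (z : Zsqrtd 2) : ℝ := z.re - z.im * Real.sqrt 2

/-- The cut-and-project set with window `W`. -/
noncomputable def cutProject (W : Set (ℝ × ℝ)) : Set (ℝ × ℝ) :=
  {p | ∃ x₁ x₂ : Zsqrtd 2, p = (emb x₁, emb x₂) ∧ (embConj x₁, embConj x₂) ∈ W}

/-!
`ℤ[√2]` is norm-Euclidean, so if `x₁, x₂` are not coprime they have a common non-unit divisor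
`d ≠ 0`. For a unit `u` with `|u| < |d|` and `|ū| ≤ |d̄|` (a power of `λ = 1 + √2` when
`|N d| ≥ 3`, and `d / √2` when `|N d| = 2`), the point `(u / d) x` lies strictly between `0` and
`x`, and its conjugate `(ū / d̄) x̄` lies in the window, which is balanced because it is
star-shaped and symmetric. The point `(√2 - 1) x` has conjugate `-λ x̄`, which accounts for the
second condition. Conversely, for coprime `x` a Bézout relation shows that every `t x ∈ 𝒫` is
`q x` with `q ∈ ℤ[√2]`; then `0 < q < 1` forces `|q̄| ≥ λ`, so `λ x̄` is in the window.
-/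

theorem two_ne_mul_self (n : ℤ) : (2 : ℤ) ≠ n * n := by
  intro h
  have h₁ : n ≤ 1 := by nlinarith
  have h₂ : -1 ≤ n := by nlinarith
  interval_cases n <;> omega

theorem norm_ne_zero_of_ne_zero {z : ℤ√2} (hz : z ≠ 0) : z.norm ≠ 0 :=
  mt (Zsqrtd.norm_eq_zero two_ne_mul_self z).1 hz

noncomputable def embHom : ℤ√2 →+* ℝ :=
  Zsqrtd.lift ⟨√2, by simp⟩

theorem embHom_apply (z : ℤ√2) : embHom z = emb z := rfl

theorem embConj_eq_emb_star (z : ℤ√2) : embConj z = emb (star z) := by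
  simp [emb, embConj, sub_eq_add_neg]

theorem emb_injective : Function.Injective emb :=
  fun _ _ h => Zsqrtd.lift_injective (R := ℝ) ⟨√2, by simp⟩ two_ne_mul_self h

theorem emb_eq_zero {z : ℤ√2} : emb z = 0 ↔ z = 0 :=
  ⟨fun h => emb_injective (h.trans (map_zero embHom).symm), fun h => h ▸ map_zero embHom⟩

theorem emb_neg (z : ℤ√2) : emb (-z) = -emb z := map_neg embHom z

theorem embConj_neg (z : ℤ√2) : embConj (-z) = -embConj z := by
  simp only [embConj_eq_emb_star, star_neg, emb_neg]

theorem emb_mul (a b : ℤ√2) : emb (a * b) = emb a * emb b := map_mul embHom a b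

theorem embConj_mul (a b : ℤ√2) : embConj (a * b) = embConj a * embConj b := by
  simp only [embConj_eq_emb_star, star_mul', emb_mul]

theorem emb_mul_embConj (z : ℤ√2) : emb z * embConj z = z.norm := by
  rw [embConj_eq_emb_star, ← emb_mul, ← Zsqrtd.norm_eq_mul_conj]
  simp [emb]

theorem abs_emb_mul_abs_embConj (z : ℤ√2) : |emb z| * |embConj z| = z.norm.natAbs := by
  rw [← abs_mul, emb_mul_embConj, Nat.cast_natAbs, Int.cast_abs]

theorem two_mul_abs_sub_mul_round_div_le (a : ℤ) {n : ℤ} (hn : n ≠ 0) :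
    2 * |a - n * round ((a : ℚ) / n)| ≤ |n| := by
  have hsub :
      (a : ℚ) - n * round ((a : ℚ) / n) = n * ((a : ℚ) / n - round ((a : ℚ) / n)) := by
    field_simp
  have hround := abs_sub_round ((a : ℚ) / n)
  have : (2 * |(a : ℚ) - n * round ((a : ℚ) / n)| : ℚ) ≤ |(n : ℚ)| := by
    rw [hsub, abs_mul]; nlinarith [abs_nonneg (n : ℚ)]
  exact_mod_cast this

def roundDiv (x y : ℤ√2) : ℤ√2 :=
  ⟨round (((x * star y).re : ℚ) / y.norm), round (((x * star y).im : ℚ) / y.norm)⟩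

theorem natAbs_lt_of_mul_eq_sq_sub_two_mul_sq {m n e f : ℤ} (hn : n ≠ 0)
    (he : 2 * |e| ≤ |n|) (hf : 2 * |f| ≤ |n|) (h : m * n = e ^ 2 - 2 * f ^ 2) :
    m.natAbs < n.natAbs := by
  have he' : 4 * e ^ 2 ≤ n ^ 2 := by nlinarith [abs_nonneg e, sq_abs e, sq_abs n]
  have hf' : 4 * f ^ 2 ≤ n ^ 2 := by nlinarith [abs_nonneg f, sq_abs f, sq_abs n]
  have hmn : 2 * (|m| * |n|) ≤ |n| * |n| := by
    rw [← abs_mul, h, abs_mul_abs_self]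
    rcases abs_cases (e ^ 2 - 2 * f ^ 2) with ⟨h, -⟩ | ⟨h, -⟩ <;> nlinarith
  have hm : 2 * |m| ≤ |n| := le_of_mul_le_mul_right (by linarith) (abs_pos.2 hn)
  zify
  linarith [abs_pos.2 hn]

theorem natAbs_norm_sub_mul_roundDiv_lt (x : ℤ√2) {y : ℤ√2} (hy : y ≠ 0) :
    (x - y * roundDiv x y).norm.natAbs < y.norm.natAbs := by
  have hn := norm_ne_zero_of_ne_zero hy
  refine natAbs_lt_of_mul_eq_sq_sub_two_mul_sq hn
    (two_mul_abs_sub_mul_round_div_le (x * star y).re hn)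
    (two_mul_abs_sub_mul_round_div_le (x * star y).im hn) ?_
  have hr : (x - y * roundDiv x y) * star y = x * star y - y.norm * roundDiv x y := by
    rw [Zsqrtd.norm_eq_mul_conj]; ring
  rw [← Zsqrtd.norm_conj y, ← Zsqrtd.norm_mul, hr, Zsqrtd.norm_def, Zsqrtd.norm_conj]
  simp [roundDiv]; ring

theorem natAbs_norm_le_natAbs_norm_mul (x : ℤ√2) {y : ℤ√2} (hy : y ≠ 0) :
    x.norm.natAbs ≤ (x * y).norm.natAbs := by
  rw [Zsqrtd.norm_mul, Int.natAbs_mul]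
  exact Nat.le_mul_of_pos_right _ (Int.natAbs_pos.2 (norm_ne_zero_of_ne_zero hy))

instance : EuclideanDomain (ℤ√2) :=
  { Zsqrtd.commRing, Zsqrtd.nontrivial with
    quotient := roundDiv
    remainder := fun x y => x - y * roundDiv x y
    quotient_zero := fun x => by simp [roundDiv]; rfl
    quotient_mul_add_remainder_eq := fun _ _ => by ring
    r := _
    r_wellFounded := (measure (Int.natAbs ∘ Zsqrtd.norm)).wf
    remainder_lt := natAbs_norm_sub_mul_roundDiv_lt
    mul_left_not_lt := fun a _ hb => not_lt_of_ge (natAbs_norm_le_natAbs_norm_mul a hb) }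

theorem abs_emb_mul_abs_embConj_of_isUnit {u : ℤ√2} (hu : IsUnit u) :
    |emb u| * |embConj u| = 1 := by
  rw [abs_emb_mul_abs_embConj, Zsqrtd.norm_eq_one_iff.2 hu, Nat.cast_one]

theorem exists_isUnit_emb_eq_zpow (n : ℤ) : ∃ u : ℤ√2, IsUnit u ∧ emb u = (1 + √2) ^ n := by
  have hunit : IsUnit (⟨1, 1⟩ : ℤ√2) := Zsqrtd.norm_eq_one_iff.1 (by decide)
  refine ⟨↑(hunit.unit ^ n), Units.isUnit _, ?_⟩
  change ((Units.map (embHom : ℤ√2 →* ℝ) (hunit.unit ^ n) : ℝˣ) : ℝ) = _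
  rw [map_zpow, Units.val_zpow_eq_zpow_val, Units.coe_map, IsUnit.unit_spec]
  simp [embHom_apply, emb]

theorem one_add_sqrt_two_le_abs_embConj {q : ℤ√2} (h₀ : 0 < emb q) (h₁ : emb q < 1) :
    1 + √2 ≤ |embConj q| := by
  by_contra! h
  obtain ⟨a, b⟩ := q
  simp only [emb, embConj, abs_lt] at h₀ h₁ h
  have hs₀ := Real.one_lt_sqrt_two
  have hs₁ := Real.sqrt_two_lt_three_halves
  have ha₀ : -2 < a := by exact_mod_cast (show (-2 : ℝ) < a by linarith)
  have ha₁ : a < 2 := by exact_mod_cast (show (a : ℝ) < 2 by linarith)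
  have hb₀ : -1 < b := by exact_mod_cast (show (-1 : ℝ) < b by nlinarith)
  have hb₁ : b < 2 := by exact_mod_cast (show (b : ℝ) < 2 by nlinarith)
  interval_cases a <;> interval_cases b <;> push_cast at h₀ h₁ h <;> linarith

theorem exists_isUnit_abs_emb_lt_of_three_le_natAbs_norm {d : ℤ√2} (hd : 3 ≤ d.norm.natAbs) :
    ∃ u : ℤ√2, IsUnit u ∧ |emb u| < |emb d| ∧ |embConj u| ≤ |embConj d| := by
  have hlam : 1 < 1 + √2 := lt_add_of_pos_right 1 (by positivity)
  have hlam₃ : 1 + √2 < 3 := by linarith [Real.sqrt_two_lt_three_halves]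
  have hdc : (3 : ℝ) ≤ |emb d| * |embConj d| := by
    rw [abs_emb_mul_abs_embConj]; exact_mod_cast hd
  have hc : 0 < |embConj d| := by
    by_contra! h; nlinarith [abs_nonneg (emb d), abs_nonneg (embConj d)]
  -- `λⁿ ≤ 1 / |d̄| < λⁿ⁺¹`, and `λⁿ⁺¹ ≤ λ / |d̄| < 3 / |d̄| ≤ |d|`
  obtain ⟨n, hn₁, hn₂⟩ := exists_mem_Ico_zpow (inv_pos.2 hc) hlam
  obtain ⟨u, hu, hemb⟩ := exists_isUnit_emb_eq_zpow (n + 1)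
  have hpos : 0 < (1 + √2) ^ n := zpow_pos (by linarith) n
  rw [zpow_add_one₀ (by positivity)] at hn₂ hemb
  have hu₁ := abs_emb_mul_abs_embConj_of_isUnit hu
  rw [hemb, abs_of_pos (by positivity)] at hu₁
  rw [← one_div, le_div_iff₀ hc] at hn₁
  rw [← one_div, div_lt_iff₀ hc] at hn₂
  refine ⟨u, hu, ?_, ?_⟩
  · rw [hemb, abs_of_pos (by positivity)]
    nlinarith
  · nlinarith [abs_nonneg (embConj u)]

theorem exists_isUnit_abs_emb_lt_of_natAbs_norm_eq_two {d : ℤ√2} (hd : d.norm.natAbs = 2) :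
    ∃ u : ℤ√2, IsUnit u ∧ |emb u| < |emb d| ∧ |embConj u| ≤ |embConj d| := by
  obtain ⟨k, hk⟩ : Even d.re := by
    have : Even (d.re * d.re) := by
      rcases Int.natAbs_eq d.norm with h | h <;> rw [hd, Zsqrtd.norm_def] at h
      exacts [⟨d.im * d.im + 1, by linear_combination h⟩,
        ⟨d.im * d.im - 1, by linear_combination h⟩]
    exact Int.even_mul.1 this |>.elim id id
  set u : ℤ√2 := ⟨d.im, k⟩
  have hdu : d = Zsqrtd.sqrtd * u := by ext <;> simp [u, hk, two_mul]
  have hu : IsUnit u := by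
    rw [← Zsqrtd.norm_eq_one_iff]
    rw [hdu, Zsqrtd.norm_mul, Int.natAbs_mul] at hd
    simpa [Zsqrtd.norm_def] using hd
  have hu₁ := abs_emb_mul_abs_embConj_of_isUnit hu
  have hemb : emb d = √2 * emb u := by rw [hdu, emb_mul]; simp [emb]
  have hconj : embConj d = -√2 * embConj u := by rw [hdu, embConj_mul]; simp [embConj]
  refine ⟨u, hu, ?_, ?_⟩
  · rw [hemb, abs_mul, abs_of_nonneg (Real.sqrt_nonneg 2)]
    nlinarith [Real.one_lt_sqrt_two, abs_nonneg (emb u), abs_nonneg (embConj u)]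
  · rw [hconj, abs_mul, abs_neg, abs_of_nonneg (Real.sqrt_nonneg 2)]
    nlinarith [Real.one_lt_sqrt_two, abs_nonneg (embConj u)]

theorem exists_isUnit_abs_emb_lt_of_not_isUnit {d : ℤ√2} (hd₀ : d ≠ 0) (hd : ¬IsUnit d) :
    ∃ u : ℤ√2, IsUnit u ∧ |emb u| < |emb d| ∧ |embConj u| ≤ |embConj d| := by
  have h₀ : d.norm.natAbs ≠ 0 := Int.natAbs_ne_zero.2 (norm_ne_zero_of_ne_zero hd₀)
  have h₁ : d.norm.natAbs ≠ 1 := mt Zsqrtd.norm_eq_one_iff.1 hd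
  obtain h₂ | h₃ : d.norm.natAbs = 2 ∨ 3 ≤ d.norm.natAbs := by omega
  exacts [exists_isUnit_abs_emb_lt_of_natAbs_norm_eq_two h₂,
    exists_isUnit_abs_emb_lt_of_three_le_natAbs_norm h₃]

theorem balanced_of_smul_mem_of_neg_eq {E : Type*} [AddCommGroup E] [Module ℝ E] {s : Set E}
    (hs : ∀ w ∈ s, ∀ t : ℝ, 0 ≤ t → t ≤ 1 → t • w ∈ s) (hneg : -s = s) : Balanced ℝ s := by
  refine balanced_iff_smul_mem.2 fun a ha w hw => ?_
  rw [Real.norm_eq_abs] at ha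
  rcases le_total 0 a with h | h
  · exact hs w hw a h (le_of_abs_le ha)
  · rw [← hneg, Set.mem_neg, ← neg_smul]
    exact hs w hw (-a) (neg_nonneg.2 h) (neg_le.2 (abs_le.1 ha).1)

theorem mk_emb_mem_cutProject_iff {W : Set (ℝ × ℝ)} {y₁ y₂ : ℤ√2} :
    (emb y₁, emb y₂) ∈ cutProject W ↔ (embConj y₁, embConj y₂) ∈ W := by
  refine ⟨fun ⟨z₁, z₂, h, hz⟩ => ?_, fun h => ⟨y₁, y₂, rfl, h⟩⟩
  obtain ⟨h₁, h₂⟩ := Prod.mk.inj h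
  rwa [emb_injective h₁, emb_injective h₂]

theorem emb_smul_mem_cutProject_iff {W : Set (ℝ × ℝ)} (q x₁ x₂ : ℤ√2) :
    emb q • (emb x₁, emb x₂) ∈ cutProject W ↔ embConj q • (embConj x₁, embConj x₂) ∈ W := by
  simpa only [Prod.smul_mk, smul_eq_mul, emb_mul, embConj_mul] using
    mk_emb_mem_cutProject_iff (W := W) (y₁ := q * x₁) (y₂ := q * x₂)

theorem exists_emb_eq_of_smul_mem_cutProject {W : Set (ℝ × ℝ)} {x₁ x₂ : ℤ√2}
    (hx : IsCoprime x₁ x₂) {t : ℝ} (ht : t • (emb x₁, emb x₂) ∈ cutProject W) :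
    ∃ q : ℤ√2, emb q = t := by
  obtain ⟨y₁, y₂, hy, -⟩ := ht
  obtain ⟨a, b, hab⟩ := hx
  obtain ⟨h₁, h₂⟩ := Prod.mk.inj hy
  refine ⟨a * y₁ + b * y₂, ?_⟩
  have := congrArg embHom hab
  rw [← embHom_apply]
  simp only [map_add, map_mul, map_one, embHom_apply] at this ⊢
  rw [← h₁, ← h₂]
  linear_combination t * this

theorem exists_smul_mem_cutProject_of_not_isCoprime {W : Set (ℝ × ℝ)} (hW : Balanced ℝ W)
    {x₁ x₂ : ℤ√2} (hx : (embConj x₁, embConj x₂) ∈ W) (h : ¬IsCoprime x₁ x₂) :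
    ∃ t ∈ Set.Ioo (0 : ℝ) 1, t • (emb x₁, emb x₂) ∈ cutProject W := by
  by_cases h0 : x₁ = 0 ∧ x₂ = 0
  · obtain ⟨rfl, rfl⟩ := h0
    refine ⟨1 / 2, by norm_num, ?_⟩
    have h00 : emb 0 = 0 := emb_eq_zero.2 rfl
    simpa only [h00, Prod.smul_mk, smul_zero] using mk_emb_mem_cutProject_iff.2 hx
  obtain ⟨d, hdu, hd₀, ⟨y₁, rfl⟩, ⟨y₂, rfl⟩⟩ : ∃ d, ¬IsUnit d ∧ d ≠ 0 ∧ d ∣ x₁ ∧ d ∣ x₂ := by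
    by_contra! H
    exact h (EuclideanDomain.isCoprime_of_dvd h0 fun d hdu hd₀ hd₁ => H d hdu hd₀ hd₁)
  obtain ⟨u, hu, hlt, hle⟩ := exists_isUnit_abs_emb_lt_of_not_isUnit hd₀ hdu
  have hd : emb d ≠ 0 := mt emb_eq_zero.1 hd₀
  have hu₀ : emb u ≠ 0 := mt emb_eq_zero.1 hu.ne_zero
  have hmem : ∀ a, |embConj a| ≤ |embConj d| →
      (emb a / emb d) • (emb (d * y₁), emb (d * y₂)) ∈ cutProject W := by
    intro a ha
    have hscale :
        (emb a / emb d) • (emb (d * y₁), emb (d * y₂)) = emb a • (emb y₁, emb y₂) := by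
      ext <;> simp only [Prod.smul_fst, Prod.smul_snd, smul_eq_mul, emb_mul] <;> field_simp
    rw [hscale, emb_smul_mem_cutProject_iff]
    refine hW.smul_mem_mono (a := embConj d) ?_ (by simpa only [Real.norm_eq_abs] using ha)
    simpa only [embConj_mul, Prod.smul_mk, smul_eq_mul] using hx
  refine ⟨|emb u / emb d|, ⟨abs_pos.2 (div_ne_zero hu₀ hd), ?_⟩, ?_⟩
  · rwa [abs_div, div_lt_one (abs_pos.2 hd)]
  · rcases abs_choice (emb u / emb d) with h | h <;> rw [h]
    · exact hmem u hle
    · rw [← neg_div, ← emb_neg]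
      exact hmem (-u) (by rwa [embConj_neg, abs_neg])

theorem sqrt_two_sub_one_smul_mem_cutProject_iff {W : Set (ℝ × ℝ)} (hW : Balanced ℝ W)
    (x₁ x₂ : ℤ√2) : (√2 - 1) • (emb x₁, emb x₂) ∈ cutProject W ↔
      (1 + √2) • (embConj x₁, embConj x₂) ∈ W := by
  have h := emb_smul_mem_cutProject_iff (W := W) ⟨-1, 1⟩ x₁ x₂
  have hemb : emb ⟨-1, 1⟩ = √2 - 1 := by simp [emb]; ring
  have hconj : embConj ⟨-1, 1⟩ = -(1 + √2) := by simp [embConj]; ring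
  rwa [hemb, hconj, neg_smul, hW.neg_mem_iff] at h

theorem one_add_sqrt_two_smul_mem_of_smul_mem_cutProject {W : Set (ℝ × ℝ)} (hW : Balanced ℝ W)
    {x₁ x₂ : ℤ√2} (hx : IsCoprime x₁ x₂) {t : ℝ} (ht₀ : 0 < t) (ht₁ : t < 1)
    (ht : t • (emb x₁, emb x₂) ∈ cutProject W) : (1 + √2) • (embConj x₁, embConj x₂) ∈ W := by
  obtain ⟨q, rfl⟩ := exists_emb_eq_of_smul_mem_cutProject hx ht
  rw [emb_smul_mem_cutProject_iff] at ht
  refine hW.smul_mem_mono ht ?_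
  rw [Real.norm_eq_abs, Real.norm_eq_abs, abs_of_pos (by positivity)]
  exact one_add_sqrt_two_le_abs_embConj ht₀ ht₁

theorem visibility_condition_cut_project_general (W : Set (ℝ × ℝ))
    (hWstar : ∀ w ∈ W, ∀ t : ℝ, 0 ≤ t → t ≤ 1 → t • w ∈ W)
    (hWsymm : -W = W)
    (x₁ x₂ : Zsqrtd 2) (hx : (embConj x₁, embConj x₂) ∈ W) :
    (∀ t : ℝ, 0 < t → t < 1 → t • ((emb x₁, emb x₂) : ℝ × ℝ) ∉ cutProject W) ↔
      IsCoprime x₁ x₂ ∧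
        ((1 + Real.sqrt 2) • ((embConj x₁, embConj x₂) : ℝ × ℝ)) ∉ W := by
  have hW : Balanced ℝ W := balanced_of_smul_mem_of_neg_eq hWstar hWsymm
  constructor
  · intro hvis
    constructor
    · by_contra hc
      obtain ⟨t, ⟨ht₀, ht₁⟩, ht⟩ := exists_smul_mem_cutProject_of_not_isCoprime hW hx hc
      exact hvis t ht₀ ht₁ ht
    · intro hlam
      have hs₀ := Real.one_lt_sqrt_two
      have hs₁ := Real.sqrt_two_lt_three_halves
      exact hvis (√2 - 1) (by linarith) (by linarith)
        ((sqrt_two_sub_one_smul_mem_cutProject_iff hW x₁ x₂).2 hlam)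
  · rintro ⟨hc, hlam⟩ t ht₀ ht₁ ht
    exact hlam (one_add_sqrt_two_smul_mem_of_smul_mem_cutProject hW hc ht₀ ht₁ ht)

theorem visibility_condition_cut_project (W : Set (ℝ × ℝ))
    (hWb : Bornology.IsBounded W) (hWint : (interior W).Nonempty)
    (hWstar : ∀ w ∈ W, ∀ t : ℝ, 0 ≤ t → t ≤ 1 → t • w ∈ W)
    (hWsymm : -W = W)
    (x₁ x₂ : Zsqrtd 2) (hx : (embConj x₁, embConj x₂) ∈ W) :
    (∀ t : ℝ, 0 < t → t < 1 → t • ((emb x₁, emb x₂) : ℝ × ℝ) ∉ cutProject W) ↔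
      IsCoprime x₁ x₂ ∧
        ((1 + Real.sqrt 2) • ((embConj x₁, embConj x₂) : ℝ × ℝ)) ∉ W :=
  visibility_condition_cut_project_general W hWstar hWsymm x₁ x₂ hx
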